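/- Let X be a real normed space that is uniformly convex, i.e., δ_X(ε) > 0 for every 0 < ε ≤ 2, where δ_X is the modulus of convexity. Then for every integer n ≥ 4 there exists an n-point metric space M such that no 4-point subspace of M embeds isometrically into X. -/

import Mathlib

/-- `d` is a metric (distance function) on `α`. -/
def IsMetricDist {α : Type*} (d : α → α → ℝ) : Prop :=
  (∀ x y, d x y = 0 ↔ x = y) ∧ (∀ x y, d x y = d y x) ∧
    (∀ x y z, d x z ≤ d x y + d y z)

/-- The modulus of convexity of a normed space `X`:
`δ_X(ε) = inf { 1 − ‖u+v‖/2 : ‖u‖ ≤ 1, ‖v‖ ≤ 1, ‖u−v‖ ≥ ε }`. -/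
noncomputable def modulusOfConvexity (X : Type*) [NormedAddCommGroup X]
    [NormedSpace ℝ X] (ε : ℝ) : ℝ :=
  sInf {t : ℝ | ∃ u v : X, ‖u‖ ≤ 1 ∧ ‖v‖ ≤ 1 ∧ ε ≤ ‖u - v‖ ∧ t = 1 - ‖u + v‖ / 2}

/-!
Take the path metric of a star whose leaf edges have lengths `1, τ, τ², …` with `τ` small
compared with `δ_X(1/2)`. Any four leaves contain one, `c`, whose edge is much shorter than the
other three. In an isometric copy inside `X`, each other leaf `w` sits at distance `a_w + a_c`
from `c`, and two of them, `u` and `v`, at distance `a_u + a_v`, almost the sum of their distances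
to `c`. Uniform convexity then forces the unit vectors from `c` towards `u` and `v` to be almost
antipodal, `‖e_u + e_v‖ < 1/2`. But three unit vectors cannot be pairwise almost antipodal,
since `2 e_x = (e_x + e_y) + (e_x + e_z) - (e_y + e_z)`.
-/

/-- The path metric of a star graph whose `i`-th leaf edge has length `a i`. -/
def starDist {α : Type*} [DecidableEq α] (a : α → ℝ) (i j : α) : ℝ :=
  if i = j then 0 else a i + a j

section StarDist

variable {α : Type*} [DecidableEq α] {a : α → ℝ}

lemma starDist_of_ne {i j : α} (h : i ≠ j) : starDist a i j = a i + a j := if_neg h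

lemma isMetricDist_starDist (ha : ∀ i, 0 < a i) : IsMetricDist (starDist a) := by
  refine ⟨fun x y => ?_, fun x y => ?_, fun x y z => ?_⟩
  · by_cases h : x = y
    · simp [starDist, h]
    · simp only [starDist_of_ne h, h, iff_false]
      linarith [ha x, ha y]
  · by_cases h : x = y
    · simp [h]
    · rw [starDist_of_ne h, starDist_of_ne (Ne.symm h), add_comm]
  · have := ha x; have := ha y; have := ha z
    unfold starDist
    split_ifs <;> subst_vars <;> first | linarith | simp_all

end StarDist

section Normed

variable {E : Type*} [NormedAddCommGroup E] [NormedSpace ℝ E]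

lemma norm_smul_inv_norm_smul (x : E) : ‖x‖ • ‖x‖⁻¹ • x = x := by
  rcases eq_or_ne x 0 with rfl | hx
  · simp
  · exact smul_inv_smul₀ (norm_ne_zero_iff.2 hx) x

lemma norm_inv_norm_smul_le_one (x : E) : ‖‖x‖⁻¹ • x‖ ≤ 1 := by
  rw [norm_smul, norm_inv, norm_norm]
  exact inv_mul_le_one

lemma norm_sub_le_of_norm_le {p q : E} (h : ‖p‖ ≤ ‖q‖) :
    ‖p - q‖ ≤ ‖p‖ * ‖‖p‖⁻¹ • p - ‖q‖⁻¹ • q‖ + (‖q‖ - ‖p‖) := by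
  have hsplit : p - q = ‖p‖ • (‖p‖⁻¹ • p - ‖q‖⁻¹ • q) - (‖q‖ - ‖p‖) • (‖q‖⁻¹ • q) := by
    rw [smul_sub, sub_smul, norm_smul_inv_norm_smul p, norm_smul_inv_norm_smul q]
    abel
  calc ‖p - q‖
      ≤ ‖‖p‖ • (‖p‖⁻¹ • p - ‖q‖⁻¹ • q)‖ + ‖(‖q‖ - ‖p‖) • (‖q‖⁻¹ • q)‖ :=
        hsplit ▸ norm_sub_le _ _
    _ ≤ ‖p‖ * ‖‖p‖⁻¹ • p - ‖q‖⁻¹ • q‖ + (‖q‖ - ‖p‖) := by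
        rw [norm_smul, norm_smul, norm_norm, Real.norm_of_nonneg (sub_nonneg.2 h)]
        gcongr
        exact mul_le_of_le_one_right (sub_nonneg.2 h) (norm_inv_norm_smul_le_one q)

lemma norm_sub_le_min_mul_add_abs (p q : E) :
    ‖p - q‖ ≤ min ‖p‖ ‖q‖ * ‖‖p‖⁻¹ • p - ‖q‖⁻¹ • q‖ + |‖p‖ - ‖q‖| := by
  rcases le_total ‖p‖ ‖q‖ with h | h
  · rw [min_eq_left h, abs_of_nonpos (sub_nonpos.2 h), neg_sub]
    exact norm_sub_le_of_norm_le h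
  · rw [min_eq_right h, abs_of_nonneg (sub_nonneg.2 h), norm_sub_rev p, norm_sub_rev (‖p‖⁻¹ • p)]
    exact norm_sub_le_of_norm_le h

lemma two_mul_norm_le_norm_add_add_norm_add_add_norm_add (x y z : E) :
    2 * ‖x‖ ≤ ‖x + y‖ + ‖x + z‖ + ‖y + z‖ :=
  calc 2 * ‖x‖ = ‖(x + y) + (x + z) - (y + z)‖ := by
        rw [← abs_two, ← Real.norm_eq_abs, ← norm_smul, two_smul]
        congr 1
        abel
    _ ≤ ‖x + y‖ + ‖x + z‖ + ‖y + z‖ := norm_sub_le_of_le (norm_add_le _ _) le_rfl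

lemma modulusOfConvexity_le {ε : ℝ} {u v : E} (hu : ‖u‖ ≤ 1) (hv : ‖v‖ ≤ 1)
    (huv : ε ≤ ‖u - v‖) : modulusOfConvexity E ε ≤ 1 - ‖u + v‖ / 2 := by
  refine csInf_le ⟨0, ?_⟩ ⟨u, v, hu, hv, huv, rfl⟩
  rintro t ⟨u', v', hu', hv', -, rfl⟩
  linarith [norm_add_le u' v']

lemma modulusOfConvexity_nonneg (ε : ℝ) : 0 ≤ modulusOfConvexity E ε :=
  Real.sInf_nonneg fun _ ⟨u, v, _, _, _, ht⟩ => by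
    rw [ht]
    linarith [norm_add_le u v]

lemma norm_inv_norm_smul_add_lt {ε r s t : ℝ}
    (hrt : t < modulusOfConvexity E ε * r) (hst : t < modulusOfConvexity E ε * s)
    {p q : E} (hp : ‖p‖ = r + t) (hq : ‖q‖ = s + t) (hpq : ‖p - q‖ = r + s) :
    ‖‖p‖⁻¹ • p + ‖q‖⁻¹ • q‖ < ε := by
  set δ := modulusOfConvexity E ε
  by_contra! hε
  have hsplit := norm_sub_le_min_mul_add_abs p q
  set D := ‖‖p‖⁻¹ • p - ‖q‖⁻¹ • q‖
  have hD : δ ≤ 1 - D / 2 := by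
    have := modulusOfConvexity_le (norm_inv_norm_smul_le_one p)
      ((norm_neg (‖q‖⁻¹ • q)).trans_le (norm_inv_norm_smul_le_one q))
      ((sub_neg_eq_add (‖p‖⁻¹ • p) _).symm ▸ hε)
    rwa [← sub_eq_add_neg] at this
  rw [hpq, hp, hq, min_add_add_right, add_sub_add_right_eq_sub, ← max_sub_min_eq_abs s r,
    max_comm, min_comm s r, ← min_add_max r s] at hsplit
  have hmt : 0 ≤ min r s + t := by
    rw [← min_add_add_right, ← hp, ← hq]
    exact le_min (norm_nonneg p) (norm_nonneg q)
  have hmin : t < δ * min r s := by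
    rcases min_choice r s with h | h <;> rwa [h]
  -- `‖p - q‖ ≤ min ‖p‖ ‖q‖ * D + |‖p‖ - ‖q‖|` and `D ≤ 2 (1 - δ)` give `δ (min r s + t) ≤ t`
  have hδt : δ * (min r s + t) ≤ t := by nlinarith [mul_le_mul_of_nonneg_left hD hmt]
  have ht : t < 0 := by nlinarith [modulusOfConvexity_nonneg (E := E) ε]
  nlinarith [mul_nonneg (modulusOfConvexity_nonneg (E := E) ε) hmt]

end Normed

lemma pow_lt_mul_pow_of_lt {τ δ : ℝ} (h0 : 0 < τ) (h1 : τ ≤ 1) (hτδ : τ < δ) {i j : ℕ}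
    (hij : i < j) : τ ^ j < δ * τ ^ i :=
  calc τ ^ j ≤ τ ^ (i + 1) := pow_le_pow_of_le_one h0.le h1 hij
    _ = τ * τ ^ i := pow_succ' τ i
    _ < δ * τ ^ i := by gcongr

theorem not_isometric_starDist {X : Type*} [NormedAddCommGroup X] [NormedSpace ℝ X]
    {α : Type*} [DecidableEq α] {a : α → ℝ} (ha : ∀ i, 0 < a i) {S : Finset α}
    (hS : 3 < S.card) {c : α} (hc : c ∈ S)
    (hac : ∀ w ∈ S, w ≠ c → a c < modulusOfConvexity X (1 / 2) * a w) (f : α → X) :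
    ¬ ∀ u ∈ S, ∀ v ∈ S, ‖f u - f v‖ = starDist a u v := by
  intro hf
  have hS' : 2 < (S.erase c).card := by rw [Finset.card_erase_of_mem hc]; omega
  obtain ⟨x, y, z, hx, hy, hz, hxy, hxz, hyz⟩ := Finset.two_lt_card_iff.1 hS'
  have hdist : ∀ u ∈ S.erase c, ‖f u - f c‖ = a u + a c := fun u hu => by
    rw [hf u (Finset.mem_of_mem_erase hu) c hc, starDist_of_ne (Finset.ne_of_mem_erase hu)]
  set e : α → X := fun u => ‖f u - f c‖⁻¹ • (f u - f c)
  have hpair : ∀ u ∈ S.erase c, ∀ v ∈ S.erase c, u ≠ v → ‖e u + e v‖ < 1 / 2 :=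
    fun u hu v hv huv => by
      refine norm_inv_norm_smul_add_lt
        (hac u (Finset.mem_of_mem_erase hu) (Finset.ne_of_mem_erase hu))
        (hac v (Finset.mem_of_mem_erase hv) (Finset.ne_of_mem_erase hv))
        (hdist u hu) (hdist v hv) ?_
      rw [sub_sub_sub_cancel_right, hf u (Finset.mem_of_mem_erase hu) v
        (Finset.mem_of_mem_erase hv), starDist_of_ne huv]
  have hex : ‖e x‖ = 1 := norm_smul_inv_norm <| norm_pos_iff.1 <|
    hdist x hx ▸ add_pos (ha x) (ha c)
  have := two_mul_norm_le_norm_add_add_norm_add_add_norm_add (e x) (e y) (e z)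
  linarith [hpair x hx y hy hxy, hpair x hx z hz hxz, hpair y hy z hz hyz]

theorem stmt16_general {X : Type*} [NormedAddCommGroup X] [NormedSpace ℝ X]
    (hX : ∀ ε : ℝ, 0 < ε → ε ≤ 2 → 0 < modulusOfConvexity X ε)
    (n : ℕ) :
    ∃ d : Fin n → Fin n → ℝ, IsMetricDist d ∧
      ∀ S : Finset (Fin n), S.card = 4 →
        ¬ ∃ f : Fin n → X, ∀ x ∈ S, ∀ y ∈ S, ‖f x - f y‖ = d x y := by
  set δ := modulusOfConvexity X (1 / 2)
  have hδ : 0 < δ := hX (1 / 2) (by norm_num) (by norm_num)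
  obtain ⟨τ, hτ0, hτ⟩ := exists_between (lt_min hδ one_pos)
  obtain ⟨hτδ, hτ1⟩ := lt_min_iff.1 hτ
  have ha : ∀ i : Fin n, 0 < τ ^ (i : ℕ) := fun i => pow_pos hτ0 _
  refine ⟨starDist fun i : Fin n => τ ^ (i : ℕ), isMetricDist_starDist ha, fun S hS => ?_⟩
  rintro ⟨f, hf⟩
  have hSne : S.Nonempty := Finset.card_pos.1 (by omega)
  refine not_isometric_starDist ha (by omega) (S.max'_mem hSne) (fun w hw hwc => ?_) f hf
  exact pow_lt_mul_pow_of_lt hτ0 hτ1.le hτδ (Fin.lt_def.1 ((S.le_max' w hw).lt_of_ne hwc))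

/-- If `X` is a uniformly convex real normed space, then for every `n ≥ 4` there exists
an `n`-point metric space (a metric `d` on `Fin n`) such that no 4-point subspace of it
embeds isometrically into `X`. -/
theorem stmt16 {X : Type*} [NormedAddCommGroup X] [NormedSpace ℝ X]
    (hX : ∀ ε : ℝ, 0 < ε → ε ≤ 2 → 0 < modulusOfConvexity X ε)
    (n : ℕ) (hn : 4 ≤ n) :
    ∃ d : Fin n → Fin n → ℝ, IsMetricDist d ∧
      ∀ S : Finset (Fin n), S.card = 4 →
        ¬ ∃ f : Fin n → X, ∀ x ∈ S, ∀ y ∈ S, ‖f x - f y‖ = d x y :=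
  stmt16_general hX n
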